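/- Let x : ℤ → ℤ satisfy x(n) ≥ −1 for all n ∈ ℤ, let i ∈ ℤ, and let t ∈ ℤ with t ≥ 0 be such that y_x(m,i) ≥ t for every m < i and y_x(m,i) = t for some m < i (so t is the type of i). Then the set of children of i, {j ∈ ℤ : j < i and R_x(j) = i}, is finite and has exactly x(i−1) + 1 − t elements. -/

import Mathlib

/-!
Write `y m = ∑_{l=m}^{i-1} x l` for `m < i`. Since `y m ≥ t ≥ 0`, the record map sends `j < i`
to `i` exactly when `y j < y j'` for all `j < j' < i`, i.e. when `j` is a strict backward record
of `y` before `i`. Distinct records have distinct values, and these values lie in `[t, x (i-1)]`.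
Conversely, since `y` drops by at most one per step backwards (`x ≥ -1`) and reaches `t`, every
value `v` in `[t, x (i-1)]` is taken by the last `j < i` with `y j ≤ v`, which is a record.
-/

attribute [local instance] Classical.propDecidable

/-- The record map of an integer sequence: `n` is sent to the least integer `j > n`
with `∑_{l=n}^{j-1} x l ≥ 0` if such `j` exists, and to `n` otherwise. -/
noncomputable def recordMap (x : ℤ → ℤ) (n : ℤ) : ℤ :=
  if ∃ j : ℤ, n < j ∧ 0 ≤ ∑ l ∈ Finset.Ico n j, x l then
    sInf {j : ℤ | n < j ∧ 0 ≤ ∑ l ∈ Finset.Ico n j, x l}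
  else n

open Finset in
theorem Finset.sum_Ico_add_sum_Ico {α M : Type*} [LinearOrder α] [LocallyFiniteOrder α]
    [AddCommMonoid M] (f : α → M) {a b c : α} (hab : a ≤ b) (hbc : b ≤ c) :
    ∑ l ∈ Ico a b, f l + ∑ l ∈ Ico b c, f l = ∑ l ∈ Ico a c, f l := by
  -- `convert` reconciles the ambient `Classical.propDecidable` with the order's `DecidableEq`.
  convert (sum_union (Ico_disjoint_Ico_consecutive a b c) (f := f)).symm
  convert (Ico_union_Ico_eq_Ico hab hbc).symm

def backwardRecords (y : ℤ → ℤ) (i : ℤ) : Set ℤ :=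
  {j | j < i ∧ ∀ j', j < j' → j' < i → y j < y j'}

namespace backwardRecords

variable {y : ℤ → ℤ} {i : ℤ}

theorem injOn : Set.InjOn y (backwardRecords y i) := by
  intro j₁ h₁ j₂ h₂ hy
  by_contra hne
  rcases lt_or_gt_of_ne hne with hlt | hlt
  · exact (h₁.2 j₂ hlt h₂.1).ne hy
  · exact (h₂.2 j₁ hlt h₁.1).ne hy.symm

theorem mapsTo_Icc {t : ℤ} (hlb : ∀ m < i, t ≤ y m) :
    Set.MapsTo y (backwardRecords y i) (Set.Icc t (y (i - 1))) := by
  rintro j ⟨hji, hrec⟩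
  refine ⟨hlb j hji, ?_⟩
  rcases (Int.le_sub_one_of_lt hji).eq_or_lt with rfl | hlt
  · exact le_rfl
  · exact (hrec (i - 1) hlt (by omega)).le

theorem surjOn_Icc {t : ℤ} (hstep : ∀ m < i, y (m + 1) ≤ y m + 1) (hatt : ∃ m < i, y m ≤ t) :
    Set.SurjOn y (backwardRecords y i) (Set.Icc t (y (i - 1))) := by
  rintro v ⟨htv, hvi⟩
  obtain ⟨j, ⟨hji, hjv⟩, hgreatest⟩ := Int.exists_greatest_of_bdd
    (P := fun j => j < i ∧ y j ≤ v) ⟨i, fun _ h => h.1.le⟩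
    (hatt.imp fun _ ⟨hm, hmt⟩ => ⟨hm, hmt.trans htv⟩)
  have hlater : ∀ j', j < j' → j' < i → v < y j' := fun j' hjj' hj'i =>
    not_le.mp fun hle => (hgreatest j' ⟨hj'i, hle⟩).not_gt hjj'
  have hyj : y j = v := by
    rcases (Int.add_one_le_of_lt hji).eq_or_lt with hlast | hlt
    · rw [← hlast, add_sub_cancel_right] at hvi
      exact hjv.antisymm hvi
    · have := hlater (j + 1) (lt_add_one j) hlt
      have := hstep j hji
      omega
  exact ⟨j, ⟨hji, fun j' hjj' hj'i => hyj ▸ hlater j' hjj' hj'i⟩, hyj⟩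

theorem bijOn_Icc {t : ℤ} (hlb : ∀ m < i, t ≤ y m) (hstep : ∀ m < i, y (m + 1) ≤ y m + 1)
    (hatt : ∃ m < i, y m ≤ t) :
    Set.BijOn y (backwardRecords y i) (Set.Icc t (y (i - 1))) :=
  ⟨mapsTo_Icc hlb, injOn, surjOn_Icc hstep hatt⟩

end backwardRecords

theorem recordMap_eq_iff {x : ℤ → ℤ} {n k : ℤ} (hnk : n < k)
    (hk : 0 ≤ ∑ l ∈ Finset.Ico n k, x l) :
    recordMap x n = k ↔ ∀ j, n < j → j < k → ∑ l ∈ Finset.Ico n j, x l < 0 := by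
  set S := {j : ℤ | n < j ∧ 0 ≤ ∑ l ∈ Finset.Ico n j, x l}
  have hkS : k ∈ S := ⟨hnk, hk⟩
  have hbdd : BddBelow S := ⟨n, fun _ hj => hj.1.le⟩
  rw [recordMap, if_pos ⟨k, hkS⟩]
  constructor
  · rintro hinf j hnj hjk
    by_contra! hj
    exact (csInf_le hbdd ⟨hnj, hj⟩).not_gt (hinf ▸ hjk)
  · intro hneg
    refine IsLeast.csInf_eq ⟨hkS, fun j ⟨hnj, hj⟩ => ?_⟩
    by_contra! hjk
    exact (hneg j hnj hjk).not_ge hj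

theorem setOf_recordMap_eq {x : ℤ → ℤ} {i : ℤ}
    (hnonneg : ∀ m < i, 0 ≤ ∑ l ∈ Finset.Ico m i, x l) :
    {j : ℤ | j < i ∧ recordMap x j = i} =
      backwardRecords (fun m => ∑ l ∈ Finset.Ico m i, x l) i := by
  ext j
  refine and_congr_right fun hji => ?_
  rw [recordMap_eq_iff hji (hnonneg j hji)]
  refine forall₂_congr fun j' hjj' => forall_congr' fun hj'i => ?_
  dsimp only
  rw [← Finset.sum_Ico_add_sum_Ico x hjj'.le hj'i.le]
  exact (add_lt_iff_neg_right _).symm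

/-- If `x n ≥ -1` for all `n` and `t ≥ 0` is the type of `i` (the infimum of the past sums
`y_x(m,i)`, attained at some `m < i`), then `i` has exactly `x (i-1) + 1 - t` children
under the record map. -/
theorem children_count_of_type (x : ℤ → ℤ) (hx : ∀ n : ℤ, -1 ≤ x n) (i t : ℤ)
    (ht : 0 ≤ t)
    (hlb : ∀ m : ℤ, m < i → t ≤ ∑ l ∈ Finset.Ico m i, x l)
    (hatt : ∃ m : ℤ, m < i ∧ (∑ l ∈ Finset.Ico m i, x l) = t) :
    {j : ℤ | j < i ∧ recordMap x j = i}.Finite ∧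
      ({j : ℤ | j < i ∧ recordMap x j = i}.ncard : ℤ) = x (i - 1) + 1 - t := by
  have hsingle : ∀ m, ∑ l ∈ Finset.Ico m (m + 1), x l = x m := by
    simp [Finset.Ico_add_one_right_eq_Icc]
  have hstep : ∀ m < i, ∑ l ∈ Finset.Ico (m + 1) i, x l ≤ ∑ l ∈ Finset.Ico m i, x l + 1 :=
    fun m hm => by linarith [Finset.sum_Ico_add_sum_Ico x (lt_add_one m).le hm, hsingle m, hx m]
  have hlast : ∑ l ∈ Finset.Ico (i - 1) i, x l = x (i - 1) := by
    simpa using hsingle (i - 1)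
  have hbij := backwardRecords.bijOn_Icc hlb hstep (hatt.imp fun _ ⟨hm, hmt⟩ => ⟨hm, hmt.le⟩)
  have htx : t ≤ x (i - 1) := hlast ▸ hlb (i - 1) (sub_one_lt i)
  rw [setOf_recordMap_eq fun m hm => ht.trans (hlb m hm)]
  refine ⟨hbij.finite_iff_finite.mpr (Set.finite_Icc _ _), ?_⟩
  rw [hbij.ncard_eq, hlast, ← Finset.coe_Icc, Set.ncard_coe_finset, Int.card_Icc]
  omega
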